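/- arXiv:0910.0935 — 2 statements merged into one kernel-verified Lean document; each statement's English description precedes it below -/
import Mathlib

section
/- The covariant tangent vector of the FF^PD_g metric: for every y ∈ ℝ^N with q(y) > 0, the function y ↦ K(y)²/2 is differentiable at y and its gradient equals (K(y)²/B(y))·( y + g·q(y)·b ); equivalently, its Fréchet derivative sends each tangent vector w to (K(y)²/B(y))·( ⟨y, w⟩ + g·q(y)·⟨b, w⟩ ). -/
noncomputable section

open Real
open scoped RealInnerProductSpace

/-- The parameter `h = sqrt(1 - g^2/4)`. -/
def hpar (g : ℝ) : ℝ := Real.sqrt (1 - g ^ 2 / 4)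

variable {N : ℕ}

/-- `v(y) = y - ⟨b,y⟩ b`, the part of `y` orthogonal to the unit axis vector `b`. -/
def vv (b y : EuclideanSpace ℝ (Fin N)) : EuclideanSpace ℝ (Fin N) := y - (inner ℝ b y : ℝ) • b

/-- `q(y) = ‖v(y)‖`. -/
def qq (b y : EuclideanSpace ℝ (Fin N)) : ℝ := ‖vv b y‖

/-- `A(y) = ⟨b,y⟩ + (g/2) q(y)`. -/
def AA (g : ℝ) (b y : EuclideanSpace ℝ (Fin N)) : ℝ := (inner ℝ b y : ℝ) + g / 2 * qq b y

/-- `B(y) = ⟨b,y⟩² + g ⟨b,y⟩ q(y) + q(y)²`. -/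
def BB (g : ℝ) (b y : EuclideanSpace ℝ (Fin N)) : ℝ :=
  (inner ℝ b y : ℝ) ^ 2 + g * (inner ℝ b y : ℝ) * qq b y + qq b y ^ 2

/-- The azimuthal angle `χ(y) = (1/h) arccos (A(y)/√B(y))`. -/
def chi (g : ℝ) (b y : EuclideanSpace ℝ (Fin N)) : ℝ :=
  1 / hpar g * Real.arccos (AA g b y / Real.sqrt (BB g b y))

/-- `J(y) = exp(-(g/2) χ(y))`. -/
def JJ (g : ℝ) (b y : EuclideanSpace ℝ (Fin N)) : ℝ := Real.exp (-(g / 2) * chi g b y)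

/-- The Finsleroid metric function `K(y) = √B(y) · J(y)`. -/
def KK (g : ℝ) (b y : EuclideanSpace ℝ (Fin N)) : ℝ := Real.sqrt (BB g b y) * JJ g b y

/-- The Ka-transformation `ζ(y) = (K(y)^h/√B(y)) (h v(y) + A(y) b)`. -/
def zeta (g : ℝ) (b y : EuclideanSpace ℝ (Fin N)) : EuclideanSpace ℝ (Fin N) :=
  (KK g b y ^ hpar g / Real.sqrt (BB g b y)) • (hpar g • vv b y + AA g b y • b)


/-! Since `B = A² + (h q)²`, `h χ` is the polar angle of the point `(A, h q)`, and with
`t = ⟨b, y⟩` one finds `dχ = (t dq - q dt) / B`. Writing `K² = B e^{-gχ}`,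
`d(K²/2) = (e^{-gχ}/2) (dB - g B dχ) = e^{-gχ} ((t + g q) dt + q dq)`, and
`t dt + q dq = ⟨y, ·⟩` because `t² + q² = ‖y‖²`. -/

lemma arccos_div_sqrt_sq_add_sq (x : ℝ) {y : ℝ} (hy : 0 < y) :
    arccos (x / √(x ^ 2 + y ^ 2)) = π / 2 - arctan (x / y) := by
  rw [arccos_eq_pi_div_two_sub_arcsin, arctan_eq_arcsin]
  congr 2
  rw [div_pow, one_add_div (by positivity), add_comm (y ^ 2), Real.sqrt_div' _ (by positivity),
    Real.sqrt_sq hy.le]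
  field_simp

theorem HasFDerivAt.arccos_div_sqrt_sq_add_sq {E : Type*} [NormedAddCommGroup E]
    [NormedSpace ℝ E] {f₁ f₂ : E → ℝ} {f₁' f₂' : E →L[ℝ] ℝ} {a : E}
    (h₁ : HasFDerivAt f₁ f₁' a) (h₂ : HasFDerivAt f₂ f₂' a) (hpos : 0 < f₂ a) :
    HasFDerivAt (fun z => Real.arccos (f₁ z / √(f₁ z ^ 2 + f₂ z ^ 2)))
      ((f₁ a ^ 2 + f₂ a ^ 2)⁻¹ • (f₁ a • f₂' - f₂ a • f₁')) a := by
  have hdiv : HasFDerivAt (fun z => f₁ z * (f₂ z)⁻¹)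
      (f₁ a • (-(f₂ a ^ 2)⁻¹ • f₂') + (f₂ a)⁻¹ • f₁') a :=
    h₁.mul ((hasDerivAt_inv hpos.ne').comp_hasFDerivAt a h₂)
  have heq : (fun z => π / 2 - Real.arctan (f₁ z * (f₂ z)⁻¹)) =ᶠ[nhds a]
      fun z => Real.arccos (f₁ z / √(f₁ z ^ 2 + f₂ z ^ 2)) := by
    filter_upwards [h₂.continuousAt.eventually (lt_mem_nhds hpos)] with z hz
    rw [_root_.arccos_div_sqrt_sq_add_sq _ hz, div_eq_mul_inv (f₁ z)]
  refine ((hdiv.arctan.const_sub (π / 2)).congr_of_eventuallyEq heq.symm).congr_fderiv ?_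
  ext w
  simp only [add_apply, sub_apply, smul_apply, neg_apply, smul_eq_mul]
  field_simp
  ring

lemma hpar_sq {g : ℝ} (hg : g ^ 2 ≤ 4) : hpar g ^ 2 = 1 - g ^ 2 / 4 :=
  Real.sq_sqrt (by linarith)

lemma hpar_pos {g : ℝ} (hg : g ^ 2 < 4) : 0 < hpar g :=
  Real.sqrt_pos.2 (by linarith)

lemma BB_eq_AA_sq_add_sq {g : ℝ} (hg : g ^ 2 ≤ 4) (b y : EuclideanSpace ℝ (Fin N)) :
    BB g b y = AA g b y ^ 2 + (hpar g * qq b y) ^ 2 := by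
  rw [mul_pow, hpar_sq hg, AA, BB]
  ring

lemma KK_sq {g : ℝ} (hg : g ^ 2 ≤ 4) (b y : EuclideanSpace ℝ (Fin N)) :
    KK g b y ^ 2 = BB g b y * exp (-g * chi g b y) := by
  have hB : 0 ≤ BB g b y := by rw [BB_eq_AA_sq_add_sq hg]; positivity
  rw [KK, JJ, mul_pow, Real.sq_sqrt hB, ← Real.exp_nat_mul]
  ring_nf

lemma qq_sq {b : EuclideanSpace ℝ (Fin N)} (hb : ‖b‖ = 1) (y : EuclideanSpace ℝ (Fin N)) :
    qq b y ^ 2 = ‖y‖ ^ 2 - ⟪b, y⟫ ^ 2 := by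
  rw [qq, vv, norm_sub_sq_real, norm_smul, real_inner_smul_right, hb, real_inner_comm,
    Real.norm_eq_abs, mul_one, sq_abs]
  ring

lemma hasFDerivAt_qq {b : EuclideanSpace ℝ (Fin N)} (hb : ‖b‖ = 1)
    {y : EuclideanSpace ℝ (Fin N)} (hq : 0 < qq b y) :
    HasFDerivAt (qq b) ((qq b y)⁻¹ • (innerSL ℝ y - ⟪b, y⟫ • innerSL ℝ b)) y := by
  have hsqrt : qq b = fun z => √(‖z‖ ^ 2 - ⟪b, z⟫ ^ 2) := by
    funext z
    rw [← qq_sq hb]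
    exact (Real.sqrt_sq (norm_nonneg _)).symm
  have hrad : HasFDerivAt (fun z => ‖z‖ ^ 2 - ⟪b, z⟫ ^ 2)
      (2 • innerSL ℝ y - (2 * ⟪b, y⟫) • innerSL ℝ b) y := by
    refine ((hasStrictFDerivAt_norm_sq y).hasFDerivAt.sub
      ((innerSL ℝ b).hasFDerivAt.pow 2)).congr_fderiv ?_
    ext w
    simp
  have hsq := hrad.sqrt (by rw [← qq_sq hb]; positivity)
  rw [← hsqrt, ← qq_sq hb, Real.sqrt_sq hq.le] at hsq
  refine hsq.congr_fderiv ?_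
  ext w
  simp only [sub_apply, smul_apply, coe_innerSL_apply, smul_eq_mul, nsmul_eq_mul, Nat.cast_ofNat]
  field_simp

section

variable {b y : EuclideanSpace ℝ (Fin N)} {q' : EuclideanSpace ℝ (Fin N) →L[ℝ] ℝ}

lemma hasFDerivAt_BB (g : ℝ) (hq' : HasFDerivAt (qq b) q' y) :
    HasFDerivAt (BB g b)
      ((2 * ⟪b, y⟫ + g * qq b y) • innerSL ℝ b + (g * ⟪b, y⟫ + 2 * qq b y) • q') y := by
  have ht := (innerSL ℝ b).hasFDerivAt (x := y)
  refine (((ht.pow 2).add ((ht.const_mul g).mul hq')).add (hq'.pow 2)).congr_fderiv ?_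
  ext w
  simp only [add_apply, smul_apply, coe_innerSL_apply, smul_eq_mul, nsmul_eq_mul, Nat.cast_ofNat]
  ring

lemma hasFDerivAt_chi {g : ℝ} (hg : g ^ 2 < 4) (hq' : HasFDerivAt (qq b) q' y)
    (hq : 0 < qq b y) :
    HasFDerivAt (chi g b) ((BB g b y)⁻¹ • (⟪b, y⟫ • q' - qq b y • innerSL ℝ b)) y := by
  have hh := hpar_pos hg
  have hA : HasFDerivAt (AA g b) (innerSL ℝ b + (g / 2) • q') y :=
    (innerSL ℝ b).hasFDerivAt.add (hq'.const_mul (g / 2))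
  have hχ : chi g b = fun z => 1 / hpar g *
      Real.arccos (AA g b z / √(AA g b z ^ 2 + (hpar g * qq b z) ^ 2)) := by
    funext z
    rw [chi, BB_eq_AA_sq_add_sq hg.le]
  rw [hχ]
  refine ((hA.arccos_div_sqrt_sq_add_sq (hq'.const_mul (hpar g)) (by positivity)).const_mul
    (1 / hpar g)).congr_fderiv ?_
  ext w
  simp only [add_apply, sub_apply, smul_apply, coe_innerSL_apply, smul_eq_mul]
  rw [BB_eq_AA_sq_add_sq hg.le, AA]
  field_simp
  ring

end

lemma hasFDerivAt_KK_sq_div_two {g : ℝ} (hg : g ^ 2 < 4) {b : EuclideanSpace ℝ (Fin N)}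
    (hb : ‖b‖ = 1) {y : EuclideanSpace ℝ (Fin N)} (hq : 0 < qq b y) :
    HasFDerivAt (fun z => KK g b z ^ 2 / 2)
      ((KK g b y ^ 2 / BB g b y) • (innerSL ℝ y + (g * qq b y) • innerSL ℝ b)) y := by
  have hq' := hasFDerivAt_qq hb hq
  have hB : 0 < BB g b y := by
    have := hpar_pos hg
    rw [BB_eq_AA_sq_add_sq hg.le]
    positivity
  have hK : (fun z => KK g b z ^ 2 / 2) = fun z => BB g b z * exp (-g * chi g b z) * 2⁻¹ := by
    funext z
    rw [KK_sq hg.le, div_eq_mul_inv]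
  rw [hK, KK_sq hg.le]
  refine (((hasFDerivAt_BB g hq').mul ((hasFDerivAt_chi hg hq' hq).const_mul (-g)).exp).mul_const
    2⁻¹).congr_fderiv ?_
  ext w
  simp only [add_apply, sub_apply, smul_apply, coe_innerSL_apply, smul_eq_mul]
  field_simp
  ring

theorem stmt10_general (N : ℕ) (g : ℝ) (hg1 : -2 < g) (hg2 : g < 2)
    (b : EuclideanSpace ℝ (Fin N)) (hb : ‖b‖ = 1)
    (y : EuclideanSpace ℝ (Fin N)) (hq : 0 < qq b y) :
    HasGradientAt (fun z => KK g b z ^ 2 / 2)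
      ((KK g b y ^ 2 / BB g b y) • (y + (g * qq b y) • b)) y ∧
    HasFDerivAt (fun z => KK g b z ^ 2 / 2)
      ((KK g b y ^ 2 / BB g b y) • (innerSL ℝ y + (g * qq b y) • innerSL ℝ b)) y := by
  have hderiv := hasFDerivAt_KK_sq_div_two (by nlinarith) hb hq
  refine ⟨hasGradientAt_iff_hasFDerivAt.2 (hderiv.congr_fderiv ?_), hderiv⟩
  ext w
  simp

theorem stmt10 (N : ℕ) (hN : 2 ≤ N) (g : ℝ) (hg1 : -2 < g) (hg2 : g < 2)
    (b : EuclideanSpace ℝ (Fin N)) (hb : ‖b‖ = 1)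
    (y : EuclideanSpace ℝ (Fin N)) (hq : 0 < qq b y) :
    HasGradientAt (fun z => KK g b z ^ 2 / 2)
      ((KK g b y ^ 2 / BB g b y) • (y + (g * qq b y) • b)) y ∧
    HasFDerivAt (fun z => KK g b z ^ 2 / 2)
      ((KK g b y ^ 2 / BB g b y) • (innerSL ℝ y + (g * qq b y) • innerSL ℝ b)) y :=
  stmt10_general N g hg1 hg2 b hb y hq
end
end

section
/- Determinant of the FF^PD_g metric tensor: for every y ∈ ℝ^N with q(y) > 0, the N×N matrix with entries g_{ij}(y) = (K(y)²/B(y))·[ δ_{ij} + (g/B(y))·( q(y)(b(y)+g q(y))·b_i b_j + q(y)(b_i v_j(y) + b_j v_i(y)) − (b(y)/q(y))·v_i(y) v_j(y) ) ] (where b_i and v_i(y) are the coordinates of b and v(y) in the standard orthonormal basis) has determinant (K(y)²/B(y))^N = J(y)^{2N}. -/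
noncomputable section

open Real
open scoped RealInnerProductSpace

variable {N : ℕ}

/-!
The metric tensor is `K²/B` times `1 + b ⊗ X₁ + v ⊗ X₂`, a rank-two perturbation of the identity
with `X₁ = (g/B)(q(b(y) + g q) b + q v)` and `X₂ = (g/B)(q b - (b(y)/q) v)`. By the
Weinstein–Aronszajn identity its determinant is the `2 × 2` determinant `det (1 + (Xₖ ⬝ uₗ))`
with `(u₁, u₂) = (b, v)`; in the orthogonal frame `‖b‖ = 1`, `b ⊥ v`, `‖v‖ = q` this equals `1`
exactly because `B = b(y)² + g b(y) q + q²`. Finally `K²/B = J²` since `K = √B J`.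
-/

open Matrix

theorem Matrix.det_one_add_vecMulVec_add_vecMulVec {n R : Type*} [Fintype n] [DecidableEq n]
    [CommRing R] (u₁ u₂ x₁ x₂ : n → R) :
    det (1 + vecMulVec u₁ x₁ + vecMulVec u₂ x₂) =
      (1 + x₁ ⬝ᵥ u₁) * (1 + x₂ ⬝ᵥ u₂) - (x₁ ⬝ᵥ u₂) * (x₂ ⬝ᵥ u₁) := by
  let U : Matrix n (Fin 2) R := (of ![u₁, u₂])ᵀ
  let X : Matrix (Fin 2) n R := of ![x₁, x₂]
  have hUX : U * X = vecMulVec u₁ x₁ + vecMulVec u₂ x₂ := by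
    ext i j
    simp [U, X, mul_apply, vecMulVec_apply, Fin.sum_univ_two]
  have hXU : ∀ k l, (X * U) k l = ![x₁, x₂] k ⬝ᵥ ![u₁, u₂] l := fun _ _ => rfl
  rw [add_assoc, ← hUX, det_one_add_mul_comm, det_fin_two]
  simp [hXU]

theorem sq_add_mul_mul_add_sq_pos {g t s : ℝ} (hg1 : -2 < g) (hg2 : g < 2) (hs : s ≠ 0) :
    0 < t ^ 2 + g * t * s + s ^ 2 := by
  have : 0 < (2 - g) * (2 + g) * s ^ 2 := by positivity [sub_pos.2 hg2, neg_lt_iff_pos_add'.1 hg1]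
  nlinarith [sq_nonneg (2 * t + g * s)]

theorem det_finsleroid_bracket {n K : Type*} [Fintype n] [DecidableEq n] [Field K]
    {g t s B : K} {b w : n → K} (hbb : b ⬝ᵥ b = 1) (hbw : b ⬝ᵥ w = 0) (hww : w ⬝ᵥ w = s ^ 2)
    (hs : s ≠ 0) (hBdef : B = t ^ 2 + g * t * s + s ^ 2) (hB : B ≠ 0) :
    (of fun i j => (if i = j then (1 : K) else 0) + g / B *
      (s * (t + g * s) * b i * b j + s * (b i * w j + b j * w i) - t / s * w i * w j)).det = 1 := by
  have hwb : w ⬝ᵥ b = 0 := by rw [dotProduct_comm, hbw]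
  have hsplit : (of fun i j => (if i = j then (1 : K) else 0) + g / B *
      (s * (t + g * s) * b i * b j + s * (b i * w j + b j * w i) - t / s * w i * w j)) =
      1 + vecMulVec b ((g / B) • ((s * (t + g * s)) • b + s • w))
        + vecMulVec w ((g / B) • (s • b - (t / s) • w)) := by
    ext i j
    simp only [of_apply, Matrix.add_apply, one_apply, vecMulVec_apply, Pi.smul_apply, Pi.add_apply,
      Pi.sub_apply, smul_eq_mul]
    ring
  rw [hsplit, det_one_add_vecMulVec_add_vecMulVec]
  simp only [smul_dotProduct, add_dotProduct, sub_dotProduct, hbb, hbw, hwb, hww, smul_eq_mul]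
  field_simp
  linear_combination (g ^ 2 * s ^ 2) * hBdef

theorem Matrix.det_of_mul_left {n R : Type*} [Fintype n] [DecidableEq n] [CommRing R] (c : R)
    (f : n → n → R) : (of fun i j => c * f i j).det = c ^ Fintype.card n * (of f).det :=
  det_smul (of f) c

theorem dotProduct_ofLp_eq_inner {ι : Type*} [Fintype ι] (x y : EuclideanSpace ℝ ι) :
    x.ofLp ⬝ᵥ y.ofLp = ⟪x, y⟫ := by
  rw [EuclideanSpace.inner_eq_star_dotProduct, star_trivial, dotProduct_comm]

theorem inner_vv_eq_zero {b : EuclideanSpace ℝ (Fin N)} (hb : ‖b‖ = 1)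
    (y : EuclideanSpace ℝ (Fin N)) : ⟪b, vv b y⟫ = 0 := by
  rw [vv, inner_sub_right, inner_smul_right, real_inner_self_eq_norm_sq, hb]
  ring

theorem BB_pos {g : ℝ} (hg1 : -2 < g) (hg2 : g < 2) {b y : EuclideanSpace ℝ (Fin N)}
    (hq : 0 < qq b y) : 0 < BB g b y :=
  sq_add_mul_mul_add_sq_pos hg1 hg2 hq.ne'

theorem KK_sq_div_BB {g : ℝ} {b y : EuclideanSpace ℝ (Fin N)} (hB : 0 < BB g b y) :
    KK g b y ^ 2 / BB g b y = JJ g b y ^ 2 := by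
  rw [KK, mul_pow, sq_sqrt hB.le, mul_div_cancel_left₀ _ hB.ne']

theorem stmt12_general (N : ℕ) (g : ℝ) (hg1 : -2 < g) (hg2 : g < 2)
    (b : EuclideanSpace ℝ (Fin N)) (hb : ‖b‖ = 1)
    (y : EuclideanSpace ℝ (Fin N)) (hq : 0 < qq b y) :
    (Matrix.of fun i j : Fin N =>
        KK g b y ^ 2 / BB g b y *
          ((if i = j then (1 : ℝ) else 0) + g / BB g b y *
            (qq b y * ((inner ℝ b y : ℝ) + g * qq b y) * b i * b j
              + qq b y * (b i * vv b y j + b j * vv b y i)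
              - (inner ℝ b y : ℝ) / qq b y * vv b y i * vv b y j))).det =
      (KK g b y ^ 2 / BB g b y) ^ N ∧
    (Matrix.of fun i j : Fin N =>
        KK g b y ^ 2 / BB g b y *
          ((if i = j then (1 : ℝ) else 0) + g / BB g b y *
            (qq b y * ((inner ℝ b y : ℝ) + g * qq b y) * b i * b j
              + qq b y * (b i * vv b y j + b j * vv b y i)
              - (inner ℝ b y : ℝ) / qq b y * vv b y i * vv b y j))).det =
      JJ g b y ^ (2 * N) := by
  have hB := BB_pos hg1 hg2 hq
  have hbracket := det_finsleroid_bracket (t := ⟪b, y⟫) (g := g) (B := BB g b y)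
    (b := b.ofLp) (w := (vv b y).ofLp)
    (by rw [dotProduct_ofLp_eq_inner, real_inner_self_eq_norm_sq, hb, one_pow])
    (by rw [dotProduct_ofLp_eq_inner, inner_vv_eq_zero hb])
    (by rw [dotProduct_ofLp_eq_inner, real_inner_self_eq_norm_sq]; rfl) hq.ne' rfl hB.ne'
  rw [det_of_mul_left, Fintype.card_fin, hbracket, mul_one, KK_sq_div_BB hB]
  exact ⟨rfl, (pow_mul _ _ _).symm⟩

theorem stmt12 (N : ℕ) (hN : 2 ≤ N) (g : ℝ) (hg1 : -2 < g) (hg2 : g < 2)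
    (b : EuclideanSpace ℝ (Fin N)) (hb : ‖b‖ = 1)
    (y : EuclideanSpace ℝ (Fin N)) (hq : 0 < qq b y) :
    (Matrix.of fun i j : Fin N =>
        KK g b y ^ 2 / BB g b y *
          ((if i = j then (1 : ℝ) else 0) + g / BB g b y *
            (qq b y * ((inner ℝ b y : ℝ) + g * qq b y) * b i * b j
              + qq b y * (b i * vv b y j + b j * vv b y i)
              - (inner ℝ b y : ℝ) / qq b y * vv b y i * vv b y j))).det =
      (KK g b y ^ 2 / BB g b y) ^ N ∧
    (Matrix.of fun i j : Fin N =>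
        KK g b y ^ 2 / BB g b y *
          ((if i = j then (1 : ℝ) else 0) + g / BB g b y *
            (qq b y * ((inner ℝ b y : ℝ) + g * qq b y) * b i * b j
              + qq b y * (b i * vv b y j + b j * vv b y i)
              - (inner ℝ b y : ℝ) / qq b y * vv b y i * vv b y j))).det =
      JJ g b y ^ (2 * N) :=
  stmt12_general N g hg1 hg2 b hb y hq
end
end
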